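/- arXiv:1511.07541 — 6 statements merged into one kernel-verified Lean document; each statement's English description precedes it below -/
import Mathlib

section
/- Let F be a forest with k connected components and let w_1,...,w_k be vertices chosen from distinct connected components of F. Let H be a graph with minimum degree at least |V(F)| - 1 and let u_1,...,u_k be distinct vertices of H. Then there is an injective graph homomorphism (embedding) of F into H mapping w_i to u_i for all 1 ≤ i ≤ k. -/
/-!
Greedy embedding. Start from the roots `w i ↦ u i` and keep a vertex set `s` that contains
the roots and is connected to them inside itself. A vertex `y ∉ s` adjacent to `s` then has
exactly one neighbour `p` in `s`, since two of them would close a cycle through `y`. As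
`|s| ≤ |V(F)| - 1 ≤ deg (f p)`, the vertex `f p` has a neighbour outside `f(s)`, and sending
`y` there extends the embedding to `s ∪ {y}`.
-/

open SimpleGraph Finset Function

namespace SimpleGraph

variable {α β ι : Type*} {F : SimpleGraph α} {H : SimpleGraph β}

theorem IsAcyclic.eq_of_adj_of_adj_of_notMem_support (hF : F.IsAcyclic) {y p q : α}
    (hp : F.Adj y p) (hq : F.Adj y q) (W : F.Walk q p) (hy : y ∉ W.support) : p = q := by
  have hmem := isBridge_iff_forall_walk_mem_edges.mp (isAcyclic_iff_forall_adj_isBridge.mp hF hp)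
    (Walk.cons hq W)
  rcases List.mem_cons.mp (Walk.edges_cons hq W ▸ hmem) with h | h
  · exact Sym2.congr_right.mp h
  · exact absurd (W.fst_mem_support_of_mem_edges h) hy

variable (F) in
def IsRootedIn (w : ι → α) (s : Set α) : Prop :=
  ∀ x ∈ s, ∃ i, ∃ W : F.Walk (w i) x, ∀ z ∈ W.support, z ∈ s

theorem IsRootedIn.insert {w : ι → α} {s : Set α} (hs : F.IsRootedIn w s) {p y : α}
    (hp : p ∈ s) (hpy : F.Adj p y) : F.IsRootedIn w (insert y s) := by
  rintro x (rfl | hx)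
  · obtain ⟨i, W, hW⟩ := hs p hp
    refine ⟨i, W.concat hpy, fun z hz => ?_⟩
    rw [Walk.support_concat, List.mem_append, List.mem_singleton] at hz
    exact hz.elim (fun hz => Or.inr (hW z hz)) Or.inl
  · obtain ⟨i, W, hW⟩ := hs x hx
    exact ⟨i, W, fun z hz => Or.inr (hW z hz)⟩

theorem IsRootedIn.eq_of_adj_of_adj (hF : F.IsAcyclic) {w : ι → α}
    (hw : Injective fun i => F.connectedComponentMk (w i)) {s : Set α} (hs : F.IsRootedIn w s)
    {y p q : α} (hy : y ∉ s) (hp : p ∈ s) (hq : q ∈ s) (hyp : F.Adj y p) (hyq : F.Adj y q) :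
    p = q := by
  obtain ⟨i, Wp, hWp⟩ := hs p hp
  obtain ⟨j, Wq, hWq⟩ := hs q hq
  obtain rfl : j = i := hw <| ConnectedComponent.eq.mpr <|
    Wq.reachable.trans <| hyq.symm.reachable.trans <| hyp.reachable.trans Wp.reachable.symm
  refine hF.eq_of_adj_of_adj_of_notMem_support hyp hyq (Wq.reverse.append Wp) fun hmem => hy ?_
  rw [Walk.support_append, List.mem_append, Walk.support_reverse, List.mem_reverse] at hmem
  exact hmem.elim (hWq y) fun h => hWp y (List.mem_of_mem_tail h)

theorem exists_adj_mem_notMem {w : ι → α} (hw : Surjective fun i => F.connectedComponentMk (w i))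
    {s : Set α} (hroots : ∀ i, w i ∈ s) {v : α} (hv : v ∉ s) :
    ∃ p ∈ s, ∃ y ∉ s, F.Adj p y := by
  obtain ⟨i, hi⟩ := hw (F.connectedComponentMk v)
  obtain ⟨W⟩ := ConnectedComponent.eq.mp hi
  obtain ⟨d, -, hd, hd'⟩ := W.exists_boundary_dart s (hroots i) hv
  exact ⟨d.fst, hd, d.snd, hd', d.adj⟩

theorem exists_adj_notMem_image [Fintype β] [DecidableRel H.Adj] [DecidableEq β]
    {s : Finset α} (hs : #s ≤ H.minDegree) (f : α → β) {p : α} (hp : p ∈ s) :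
    ∃ b, H.Adj (f p) b ∧ b ∉ s.image f := by
  by_contra! h
  have hsub : H.neighborFinset (f p) ⊆ (s.image f).erase (f p) := fun b hb =>
    mem_erase.mpr ⟨(H.ne_of_adj ((H.mem_neighborFinset _ _).mp hb)).symm,
      h b ((H.mem_neighborFinset _ _).mp hb)⟩
  have := card_le_card hsub
  rw [card_neighborFinset_eq_degree, card_erase_of_mem (mem_image_of_mem f hp)] at this
  have := H.minDegree_le_degree (f p)
  have := card_image_le (s := s) (f := f)
  have := card_pos.mpr ⟨p, hp⟩
  omega

theorem isRootedIn_range (w : ι → α) : F.IsRootedIn w (Set.range w) := by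
  rintro _ ⟨i, rfl⟩
  exact ⟨i, Walk.nil, by simp⟩

variable (F H) in
def IsEmbeddingOn (f : α → β) (s : Set α) : Prop :=
  Set.InjOn f s ∧ ∀ ⦃x⦄, x ∈ s → ∀ ⦃y⦄, y ∈ s → F.Adj x y → H.Adj (f x) (f y)

theorem isEmbeddingOn_range {w : ι → α} (hw : Injective fun i => F.connectedComponentMk (w i))
    {f : α → β} (hf : Injective (f ∘ w)) : F.IsEmbeddingOn H f (Set.range w) := by
  refine ⟨?_, ?_⟩
  · rintro _ ⟨i, rfl⟩ _ ⟨j, rfl⟩ h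
    rw [hf h]
  · rintro _ ⟨i, rfl⟩ _ ⟨j, rfl⟩ h
    obtain rfl : i = j := hw (ConnectedComponent.eq.mpr h.reachable)
    exact absurd h F.irrefl

theorem IsEmbeddingOn.insert_update [DecidableEq α] {f : α → β} {s : Set α}
    (hf : F.IsEmbeddingOn H f s) {y : α} (hy : y ∉ s) {b : β} (hb : b ∉ f '' s)
    (hadj : ∀ q ∈ s, F.Adj y q → H.Adj b (f q)) :
    F.IsEmbeddingOn H (update f y b) (insert y s) := by
  have hfs : ∀ x ∈ s, update f y b x = f x := fun x hx =>
    update_of_ne (ne_of_mem_of_not_mem hx hy) _ _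
  refine ⟨?_, ?_⟩
  · rintro x (rfl | hx) x' (rfl | hx') h
    · rfl
    · rw [update_self, hfs x' hx'] at h
      exact absurd ⟨x', hx', h.symm⟩ hb
    · rw [update_self, hfs x hx] at h
      exact absurd ⟨x, hx, h⟩ hb
    · rw [hfs x hx, hfs x' hx'] at h
      exact hf.1 hx hx' h
  · rintro x (rfl | hx) x' (rfl | hx') h
    · exact absurd h F.irrefl
    · rw [update_self, hfs x' hx']
      exact hadj x' hx' h
    · rw [update_self, hfs x hx]
      exact (hadj x hx h.symm).symm
    · rw [hfs x hx, hfs x' hx']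
      exact hf.2 hx hx' h

theorem IsEmbeddingOn.exists_insert [Fintype α] [DecidableEq α] [Fintype β]
    [DecidableRel H.Adj] (hF : F.IsAcyclic) {w : ι → α}
    (hw : Bijective fun i => F.connectedComponentMk (w i))
    (hδ : Fintype.card α - 1 ≤ H.minDegree) {s : Finset α} (hsu : s ≠ univ)
    (hroots : ∀ i, w i ∈ s) (hs : F.IsRootedIn w s) {f : α → β} (hf : F.IsEmbeddingOn H f s) :
    ∃ y ∉ s, F.IsRootedIn w ↑(insert y s) ∧
      ∃ f' : α → β, F.IsEmbeddingOn H f' ↑(insert y s) ∧ ∀ x ∈ s, f' x = f x := by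
  classical
  obtain ⟨v, -, hv⟩ := exists_of_ssubset (ssubset_univ_iff.mpr hsu)
  obtain ⟨p, hp, y, hy, hpy⟩ := exists_adj_mem_notMem hw.2 (s := s) hroots hv
  have hcard : #s ≤ H.minDegree := by
    have := card_lt_univ_of_notMem hy
    omega
  obtain ⟨b, hpb, hb⟩ := exists_adj_notMem_image hcard f hp
  have hf' : F.IsEmbeddingOn H (update f y b) (insert y s) := by
    refine hf.insert_update hy (by simpa using hb) fun q hq hyq => ?_
    rw [hs.eq_of_adj_of_adj hF hw.1 hy hp hq hpy.symm hyq] at hpb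
    exact hpb.symm
  exact ⟨y, hy, by simpa using hs.insert hp hpy, update f y b, by simpa using hf',
    fun x hx => update_of_ne (ne_of_mem_of_not_mem hx hy) _ _⟩

theorem IsEmbeddingOn.exists_extend [Fintype α] [Fintype β] [DecidableRel H.Adj]
    (hF : F.IsAcyclic) {w : ι → α} (hw : Bijective fun i => F.connectedComponentMk (w i))
    (hδ : Fintype.card α - 1 ≤ H.minDegree) {s : Finset α} (hroots : ∀ i, w i ∈ s)
    (hs : F.IsRootedIn w s) {f : α → β} (hf : F.IsEmbeddingOn H f s) :
    ∃ g : α → β, F.IsEmbeddingOn H g Set.univ ∧ ∀ x ∈ s, g x = f x := by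
  classical
  induction hn : Fintype.card α - #s generalizing s f with
  | zero =>
    obtain rfl : s = univ := eq_univ_of_card s (le_antisymm (card_le_univ s) (by omega))
    exact ⟨f, by simpa using hf, fun _ _ => rfl⟩
  | succ n ih =>
    have hsu : s ≠ univ := by
      rintro rfl
      simp at hn
    obtain ⟨y, hy, hs', f', hf', hf'f⟩ := hf.exists_insert hF hw hδ hsu hroots hs
    obtain ⟨g, hg, hgf'⟩ := ih (fun i => mem_insert_of_mem (hroots i)) hs' hf'
      (by rw [card_insert_of_notMem hy]; omega)
    exact ⟨g, hg, fun x hx => (hgf' x (mem_insert_of_mem hx)).trans (hf'f x hx)⟩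

end SimpleGraph

/-- Let `F` be a forest with `k` connected components and `w 0, ..., w (k-1)` vertices
from distinct components (one from each). If `H` has minimum degree at least `|V(F)| - 1`
and `u 0, ..., u (k-1)` are distinct vertices of `H`, then `F` embeds into `H` with each
`w i` mapped to `u i`. -/
theorem stmt_1 {α β : Type*} [Fintype α] [Fintype β]
    (F : SimpleGraph α) (hF : F.IsAcyclic)
    (H : SimpleGraph β) [DecidableRel H.Adj]
    (k : ℕ) (w : Fin k → α)
    (hw : Function.Bijective (fun i => F.connectedComponentMk (w i)))
    (hδ : Fintype.card α - 1 ≤ H.minDegree)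
    (u : Fin k → β) (hu : Function.Injective u) :
    ∃ f : F →g H, Function.Injective f ∧ ∀ i : Fin k, f (w i) = u i := by
  classical
  set e := Equiv.ofBijective _ hw
  set f₀ : α → β := fun x => u (e.symm (F.connectedComponentMk x))
  have hf₀ : ∀ i, f₀ (w i) = u i := fun i => congrArg u (e.symm_apply_apply i)
  have hroots : ∀ i, w i ∈ univ.image w := fun i => mem_image_of_mem w (mem_univ i)
  have hrange : (↑(univ.image w) : Set α) = Set.range w := by simp
  have hemb₀ : F.IsEmbeddingOn H f₀ (Set.range w) :=
    isEmbeddingOn_range hw.1 fun i j h => hu (by simpa [hf₀] using h)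
  obtain ⟨g, ⟨hginj, hgadj⟩, hgf₀⟩ := IsEmbeddingOn.exists_extend hF hw hδ hroots
    (hrange ▸ isRootedIn_range w) (hrange ▸ hemb₀)
  exact ⟨⟨g, fun h => hgadj trivial trivial h⟩, Set.injOn_univ.mp hginj,
    fun i => (hgf₀ _ (hroots i)).trans (hf₀ i)⟩
end

section
/- Every tree T with at least 3 vertices contains a vertex v such that the vertex set of the forest T - v can be partitioned into two disjoint sets K and H with no edges between K and H, satisfying (|V(T)|-1)/3 ≤ |K| ≤ 2(|V(T)|-1)/3 and (|V(T)|-1)/3 ≤ |H| ≤ 2(|V(T)|-1)/3. -/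
/-!
Every tree has a centroid: a vertex `v` at which each branch (component of `T - v`) has at most
`n / 2` vertices. To find one, start anywhere and step into a branch with more than `n / 2`
vertices; the branch ahead of the walker strictly shrinks, and it can never point back, because
the two branches across an edge together have exactly `n` vertices.

For `n ≥ 3` we have `n / 2 ≤ 2 (n - 1) / 3`, so the branch sizes at `v` are numbers each at most
two thirds of their total `n - 1`. Such numbers split into two groups with sums between a third
and two thirds of the total: take a subfamily of minimal cardinality whose sum is at least a
third; dropping one member brings the sum below a third, and that member adds at most another
third unless it alone already lies in the range.
-/

open Finset

lemma Finset.exists_subset_balanced_sum {α : Type*} (s : Finset α) (f : α → ℕ)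
    (hf : ∀ a ∈ s, 3 * f a ≤ 2 * ∑ b ∈ s, f b) :
    ∃ t ⊆ s, ∑ b ∈ s, f b ≤ 3 * ∑ b ∈ t, f b ∧ 3 * ∑ b ∈ t, f b ≤ 2 * ∑ b ∈ s, f b := by
  classical
  by_cases hbig : ∃ a ∈ s, ∑ b ∈ s, f b ≤ 3 * f a
  · obtain ⟨a, ha, hle⟩ := hbig
    exact ⟨{a}, singleton_subset_iff.2 ha, by simpa using hle, by simpa using hf a ha⟩
  push Not at hbig
  obtain ⟨t, ht, hmin⟩ := exists_min_image {t ∈ s.powerset | ∑ b ∈ s, f b ≤ 3 * ∑ b ∈ t, f b}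
    card ⟨s, by simp only [mem_filter, mem_powerset]; exact ⟨subset_rfl, by omega⟩⟩
  rw [mem_filter, mem_powerset] at ht
  refine ⟨t, ht.1, ht.2, ?_⟩
  obtain rfl | ⟨a, hat⟩ := t.eq_empty_or_nonempty
  · simp
  have herase : 3 * ∑ b ∈ t.erase a, f b < ∑ b ∈ s, f b := by
    by_contra! hle
    have := hmin (t.erase a) (by simp [(erase_subset a t).trans ht.1, hle])
    have := card_erase_lt_of_mem hat
    omega
  have := sum_erase_add t f hat
  have := hbig a (ht.1 hat)
  omega

lemma Finset.exists_balanced_union_of_fibers {α ι : Type*} [DecidableEq ι] (s : Finset α)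
    (c : α → ι) (hc : ∀ i, 3 * #{x ∈ s | c x = i} ≤ 2 * #s) :
    ∃ t : Finset ι, #s ≤ 3 * #{x ∈ s | c x ∈ t} ∧ 3 * #{x ∈ s | c x ∈ t} ≤ 2 * #s := by
  have hsum := card_eq_sum_card_image c s
  obtain ⟨t, -, hlow, hhigh⟩ := exists_subset_balanced_sum (s.image c)
    (fun i => #{x ∈ s | c x = i}) (fun i _ => hsum ▸ hc i)
  have hK : #{x ∈ s | c x ∈ t} = ∑ i ∈ t, #{x ∈ s | c x = i} := by
    rw [card_eq_sum_card_fiberwise (s := {x ∈ s | c x ∈ t}) (t := t)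
      fun x hx => (mem_filter.1 hx).2]
    refine sum_congr rfl fun i hi => ?_
    rw [filter_filter]
    exact congrArg card (filter_congr fun x _ => ⟨fun h => h.2, fun h => ⟨h ▸ hi, h⟩⟩)
  exact ⟨t, hK ▸ hsum ▸ hlow, hK ▸ hsum ▸ hhigh⟩

namespace SimpleGraph

variable {V : Type*} {G : SimpleGraph V} {u v w x : V}

lemma eq_of_reachable_deleteIncidenceSet (h : (G.deleteIncidenceSet v).Reachable u v) : u = v := by
  obtain ⟨p⟩ := h.symm
  cases p with
  | nil => rfl
  | cons hadj _ => exact absurd rfl (deleteIncidenceSet_adj.1 hadj).2.1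

lemma Reachable.deleteIncidenceSet_of_adj (h : (G.deleteIncidenceSet v).Reachable u w)
    (hu : u ≠ v) (hwx : G.Adj w x) (hx : x ≠ v) : (G.deleteIncidenceSet v).Reachable u x :=
  h.trans (deleteIncidenceSet_adj.2
    ⟨hwx, fun hw => hu (eq_of_reachable_deleteIncidenceSet (hw ▸ h)), hx⟩).reachable

lemma Reachable.exists_adj_reachable_deleteIncidenceSet (h : G.Reachable x v) (hx : x ≠ v) :
    ∃ u, G.Adj v u ∧ (G.deleteIncidenceSet v).Reachable u x := by
  obtain ⟨p⟩ := h
  induction p with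
  | nil => exact absurd rfl hx
  | @cons x y v hxy _ ih =>
    by_cases hy : y = v
    · subst hy
      exact ⟨x, hxy.symm, .rfl⟩
    · obtain ⟨u, hvu, hu⟩ := ih hy
      exact ⟨u, hvu, hu.deleteIncidenceSet_of_adj hvu.ne' hxy.symm hx⟩

lemma Reachable.reachable_deleteIncidenceSet_or (h : G.Reachable x u) (huv : u ≠ v) :
    (G.deleteIncidenceSet v).Reachable u x ∨ (G.deleteIncidenceSet u).Reachable v x := by
  obtain ⟨p⟩ := h
  induction p with
  | nil => exact .inl .rfl
  | @cons x _ u hxy _ ih =>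
    rcases ih huv with hy | hy
    · by_cases hx : x = v
      · exact .inr (hx ▸ .rfl)
      · exact .inl (hy.deleteIncidenceSet_of_adj huv hxy.symm hx)
    · by_cases hx : x = u
      · exact .inl (hx ▸ .rfl)
      · exact .inr (hy.deleteIncidenceSet_of_adj huv.symm hxy.symm hx)

lemma IsAcyclic.not_reachable_deleteIncidenceSet_and (hG : G.IsAcyclic) (huv : G.Adj u v) :
    ¬((G.deleteIncidenceSet v).Reachable u x ∧ (G.deleteIncidenceSet u).Reachable v x) := by
  rintro ⟨hu, hv⟩
  have hle : ∀ a, s(u, v) ∈ G.incidenceSet a →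
      G.deleteIncidenceSet a ≤ G.deleteEdges {s(u, v)} :=
    fun a ha => deleteEdges_anti (Set.singleton_subset_iff.2 ha)
  exact isBridge_iff.1 (isAcyclic_iff_forall_adj_isBridge.1 hG huv)
    ((hu.mono (hle v (G.mk'_mem_incidenceSet_right_iff.2 huv))).trans
      (hv.mono (hle u (G.mk'_mem_incidenceSet_left_iff.2 huv))).symm)

variable [Fintype V]

open Classical in
/-- For `u ≠ v`, the vertices of the component of `G - v` containing `u`. Deleting the edges at `v`
rather than `v` itself keeps every graph on the same vertex type. -/
noncomputable def branch (G : SimpleGraph V) (v u : V) : Finset V :=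
  {x | (G.deleteIncidenceSet v).Reachable u x}

lemma mem_branch : x ∈ G.branch v u ↔ (G.deleteIncidenceSet v).Reachable u x := by
  simp [branch]

def IsCentroid (G : SimpleGraph V) (v : V) : Prop :=
  ∀ u, G.Adj v u → 2 * #(G.branch v u) ≤ Fintype.card V

lemma IsTree.card_branch_add_card_branch (hG : G.IsTree) (huv : G.Adj u v) :
    #(G.branch v u) + #(G.branch u v) = Fintype.card V := by
  classical
  rw [← card_union_of_disjoint, ← card_univ]
  · congr
    ext x
    simpa [mem_branch] using
      (hG.connected.preconnected x u).reachable_deleteIncidenceSet_or huv.ne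
  · exact Finset.disjoint_left.2 fun x hu hv =>
      hG.isAcyclic.not_reachable_deleteIncidenceSet_and huv ⟨mem_branch.1 hu, mem_branch.1 hv⟩

lemma IsTree.branch_ssubset_branch (hG : G.IsTree) (huv : G.Adj u v) (huw : G.Adj u w)
    (hwv : w ≠ v) : G.branch u w ⊂ G.branch v u := by
  have hw : (G.deleteIncidenceSet v).Reachable u w :=
    (deleteIncidenceSet_adj.2 ⟨huw, huv.ne, hwv⟩).reachable
  have hsub : G.branch u w ⊆ G.branch v u := by
    intro x hx
    rw [mem_branch] at hx ⊢
    refine ((hG.connected.preconnected x u).reachable_deleteIncidenceSet_or huv.ne).resolve_right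
      fun hvx => hG.isAcyclic.not_reachable_deleteIncidenceSet_and huv ⟨hw, hvx.trans hx.symm⟩
  refine (ssubset_iff_of_subset hsub).2 ⟨u, mem_branch.2 .rfl, fun hu => huw.ne ?_⟩
  exact (eq_of_reachable_deleteIncidenceSet (mem_branch.1 hu)).symm

lemma IsTree.exists_isCentroid [Nonempty V] (hG : G.IsTree) : ∃ v, G.IsCentroid v := by
  classical
  by_contra! h
  simp only [IsCentroid, not_forall, not_le, exists_prop] at h
  obtain ⟨⟨v, u⟩, hvu, hmin⟩ := exists_min_image
    {p : V × V | G.Adj p.1 p.2 ∧ Fintype.card V < 2 * #(G.branch p.1 p.2)}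
    (fun p => #(G.branch p.1 p.2))
    (by
      obtain ⟨u, hu⟩ := h (Classical.arbitrary V)
      exact ⟨(_, u), by simpa using hu⟩)
  simp only [mem_filter, mem_univ, true_and] at hvu
  obtain ⟨w, huw, hw⟩ := h u
  by_cases hwv : w = v
  · subst hwv
    have := hG.card_branch_add_card_branch hvu.1
    omega
  · have := card_lt_card (hG.branch_ssubset_branch hvu.1.symm huw hwv)
    have : #(G.branch v u) ≤ #(G.branch u w) := hmin (u, w) (by simp [huw, hw])
    omega

open Classical in
lemma IsCentroid.three_mul_card_component_le [DecidableEq V] (hv : G.IsCentroid v)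
    (hG : G.IsTree) (hn : 3 ≤ Fintype.card V)
    (C : (G.deleteIncidenceSet v).ConnectedComponent) :
    3 * #{x ∈ univ \ {v} | (G.deleteIncidenceSet v).connectedComponentMk x = C} ≤
      2 * (Fintype.card V - 1) := by
  obtain hC | ⟨x, hx⟩ := eq_empty_or_nonempty {x ∈ univ \ {v} |
      (G.deleteIncidenceSet v).connectedComponentMk x = C}
  · simp [hC]
  simp only [mem_filter, mem_sdiff, mem_univ, mem_singleton, true_and] at hx
  obtain ⟨u, hvu, hux⟩ :=
    (hG.connected.preconnected x v).exists_adj_reachable_deleteIncidenceSet hx.1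
  have hsub : {y ∈ univ \ {v} | (G.deleteIncidenceSet v).connectedComponentMk y = C} ⊆
      G.branch v u := fun y hy =>
    mem_branch.2 (hux.trans (ConnectedComponent.eq.1 (hx.2.trans (mem_filter.1 hy).2.symm)))
  have := card_le_card hsub
  have := hv u hvu
  omega

end SimpleGraph

/-- Every tree `T` with at least 3 vertices has a vertex `v` such that the vertices of
`T - v` can be partitioned into sets `K` and `H` with no edges between them, each of
size between `(|V(T)|-1)/3` and `2(|V(T)|-1)/3`. -/
theorem stmt_2 {V : Type*} [Fintype V] [DecidableEq V] (T : SimpleGraph V)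
    (hT : T.IsTree) (hcard : 3 ≤ Fintype.card V) :
    ∃ (v : V) (K H : Finset V), Disjoint K H ∧ K ∪ H = Finset.univ \ {v} ∧
      (∀ x ∈ K, ∀ y ∈ H, ¬ T.Adj x y) ∧
      Fintype.card V - 1 ≤ 3 * K.card ∧ 3 * K.card ≤ 2 * (Fintype.card V - 1) ∧
      Fintype.card V - 1 ≤ 3 * H.card ∧ 3 * H.card ≤ 2 * (Fintype.card V - 1) := by
  classical
  have : Nonempty V := Fintype.card_pos_iff.1 (by omega)
  obtain ⟨v, hv⟩ := hT.exists_isCentroid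
  set c := (T.deleteIncidenceSet v).connectedComponentMk
  have hS : #(univ \ {v}) = Fintype.card V - 1 := by simp [card_univ_sdiff]
  obtain ⟨t, hlow, hhigh⟩ := exists_balanced_union_of_fibers (univ \ {v}) c
    fun C => hS ▸ hv.three_mul_card_component_le hT hcard C
  have hKH := card_filter_add_card_filter_not (s := univ \ {v}) (fun x => c x ∈ t)
  refine ⟨v, {x ∈ univ \ {v} | c x ∈ t}, {x ∈ univ \ {v} | c x ∉ t},
    disjoint_filter_filter_not _ _ _, filter_union_filter_not_eq _ _, ?_,
    by omega, by omega, by omega, by omega⟩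
  intro x hx y hy hxy
  simp only [mem_filter, mem_sdiff, mem_univ, mem_singleton, true_and] at hx hy
  have hcxy : c x = c y := SimpleGraph.ConnectedComponent.connectedComponentMk_eq_of_adj
    (SimpleGraph.deleteIncidenceSet_adj.2 ⟨hxy, hx.1, hy.1⟩)
  exact hy.2 (hcxy ▸ hx.2)
end

section
/- For every tree T_n on n vertices, the Ramsey number R(T_n, C_3) equals 2n - 1. That is: every graph G on 2n - 1 vertices either contains a triangle or its complement contains T_n as a subgraph, and there exists a graph on 2n - 2 vertices witnessing that 2n - 2 does not suffice. -/
/-!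
Upper bound: in a triangle-free graph `G` every neighbourhood is independent, so a vertex of
degree at least `n` yields an `n`-clique of `Gᶜ`, which contains every graph on `n` vertices.
Otherwise `Gᶜ` has minimum degree at least `(2n - 2) - (n - 1) = n - 1`, and a tree on `n`
vertices embeds into any graph of minimum degree `n - 1` greedily: remove a leaf, embed the rest,
and send the leaf to a neighbour of its parent's image that is not yet used.

Lower bound: the complement of `K_{n-1,n-1}` (`completeEquipartiteGraph 2 (n - 1)`) is two
disjoint copies of `K_{n-1}`, and a connected graph on `n` vertices fits into neither.
-/

open Finset SimpleGraph

namespace SimpleGraph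

variable {α β γ : Type*} {T : SimpleGraph α} {H : SimpleGraph β}

theorem Reachable.apply_eq_of_forall_adj {c : α → γ} (hc : ∀ ⦃x y⦄, T.Adj x y → c x = c y)
    {x y : α} (h : T.Reachable x y) : c x = c y := by
  obtain ⟨p⟩ := h
  induction p with
  | nil => rfl
  | cons hadj _ ih => exact (hc hadj).trans ih

theorem IsTree.induce_compl_singleton_of_degree_eq_one (hT : T.IsTree) {v : α}
    [Fintype (T.neighborSet v)] (hv : T.degree v = 1) : (T.induce {v}ᶜ).IsTree :=
  ⟨hT.connected.induce_compl_singleton_of_degree_eq_one hv, hT.isAcyclic.induce _⟩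

theorem IsClique.isContained_of_card_le [Fintype α] {s : Set β} [Fintype s] (hs : H.IsClique s)
    (h : Fintype.card α ≤ Fintype.card s) : T ⊑ H := by
  obtain ⟨e⟩ := Function.Embedding.nonempty_of_card_le h
  refine ⟨⟨⟨fun x ↦ e x, fun {x y} hxy ↦ hs (e x).2 (e y).2 ?_⟩, ?_⟩⟩
  · exact fun h ↦ hxy.ne (e.injective (Subtype.ext h))
  · exact fun x y h ↦ e.injective (Subtype.ext h)

theorem exists_adj_notMem_range [H.LocallyFinite] [Fintype γ] (f : γ → β) {y : β}
    (hy : y ∈ Set.range f) (h : Fintype.card γ ≤ H.degree y) :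
    ∃ b, H.Adj y b ∧ b ∉ Set.range f := by
  classical
  by_contra! hsub
  have hle : H.neighborFinset y ⊆ (univ.image f).erase y := fun b hb ↦ by
    rw [mem_neighborFinset] at hb
    exact mem_erase.2 ⟨hb.ne', by simpa using hsub b hb⟩
  have hy' : y ∈ univ.image f := by simpa using hy
  have hpos : 0 < #(univ.image f) := card_pos.2 ⟨y, hy'⟩
  have hdeg := (card_le_card hle).trans_eq (card_erase_of_mem hy')
  have himage := card_image_le (s := univ) (f := f)
  rw [card_neighborFinset_eq_degree] at hdeg
  rw [card_univ] at himage
  omega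

theorem isContained_of_copy_induce_compl_singleton {v : α} (f : Copy (T.induce {v}ᶜ) H) {b : β}
    (hb : b ∉ Set.range f) (hadj : ∀ w (hw : w ∈ ({v}ᶜ : Set α)), T.Adj v w → H.Adj b (f ⟨w, hw⟩)) :
    T ⊑ H := by
  classical
  let g : α → β := fun x ↦ if h : x = v then b else f ⟨x, h⟩
  have hg_adj : ∀ {x y}, T.Adj x y → H.Adj (g x) (g y) := fun {x y} hxy ↦ by
    by_cases hx : x = v <;> by_cases hy : y = v
    · exact absurd (hx.trans hy.symm) hxy.ne
    · subst hx; simpa [g, hy] using hadj y hy hxy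
    · subst hy; simpa [g, hx] using (hadj x hx hxy.symm).symm
    · simpa [g, hx, hy] using f.toHom.map_adj (show (T.induce {v}ᶜ).Adj ⟨x, hx⟩ ⟨y, hy⟩ from hxy)
  have hg_inj : Function.Injective g := fun x y hxy ↦ by
    by_cases hx : x = v <;> by_cases hy : y = v
    · exact hx.trans hy.symm
    · subst hx; simp only [g, hy, dite_true, dite_false] at hxy
      exact absurd ⟨_, hxy.symm⟩ hb
    · subst hy; simp only [g, hx, dite_true, dite_false] at hxy
      exact absurd ⟨_, hxy⟩ hb
    · simp only [g, hx, hy, dite_false] at hxy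
      exact congrArg Subtype.val (f.injective hxy)
  exact ⟨⟨⟨g, hg_adj⟩, hg_inj⟩⟩

theorem IsTree.isContained_of_forall_le_degree [Fintype α] (hT : T.IsTree) [Nonempty β]
    [H.LocallyFinite] (hH : ∀ b, Fintype.card α - 1 ≤ H.degree b) : T ⊑ H := by
  refine Fintype.induction_subsingleton_or_nontrivial (P := fun α _ ↦ ∀ T : SimpleGraph α,
    T.IsTree → (∀ b, Fintype.card α - 1 ≤ H.degree b) → T ⊑ H) α ?_ ?_ T hT hH
  · intro α _ _ T _ _
    obtain ⟨b⟩ := ‹Nonempty β›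
    exact ⟨⟨⟨fun _ ↦ b, fun hxy ↦ (hxy.ne (Subsingleton.elim _ _)).elim⟩,
      fun _ _ _ ↦ Subsingleton.elim _ _⟩⟩
  · intro α _ _ ih T hT hH
    classical
    obtain ⟨v, hv⟩ := hT.exists_vert_degree_one_of_nontrivial
    obtain ⟨u, hvu, hu⟩ := degree_eq_one_iff_existsUnique_adj.1 hv
    have hcard : Fintype.card ({v}ᶜ : Set α) = Fintype.card α - 1 := by
      rw [Fintype.card_compl_set, Set.card_singleton]
    obtain ⟨f⟩ := ih _ (by rw [hcard]; exact Nat.sub_lt Fintype.card_pos one_pos) _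
      (hT.induce_compl_singleton_of_degree_eq_one hv)
      (fun b ↦ by rw [hcard]; exact (Nat.sub_le _ _).trans (hH b))
    obtain ⟨b, hub, hb⟩ :=
      exists_adj_notMem_range f (y := f ⟨u, hvu.ne'⟩) ⟨_, rfl⟩ (by rw [hcard]; exact hH _)
    refine isContained_of_copy_induce_compl_singleton f hb fun w hw hvw ↦ ?_
    obtain rfl := hu w hvw
    exact hub.symm

theorem CliqueFree.isContained_compl_of_isTree [Fintype α] [Fintype β] {G : SimpleGraph β}
    (hG : G.CliqueFree 3) (hT : T.IsTree) (hcard : 2 * Fintype.card α - 1 ≤ Fintype.card β) :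
    T ⊑ Gᶜ := by
  classical
  have hα : 0 < Fintype.card α := Fintype.card_pos_iff.2 hT.connected.nonempty
  by_cases hdeg : ∃ v, Fintype.card α ≤ G.degree v
  · obtain ⟨v, hv⟩ := hdeg
    refine IsClique.isContained_of_card_le (s := G.neighborSet v) ?_ ?_
    · exact (isClique_compl G).2 (isIndepSet_neighborSet_of_triangleFree G hG v)
    · rwa [card_neighborSet_eq_degree]
  · push Not at hdeg
    have : Nonempty β := Fintype.card_pos_iff.1 (by omega)
    refine hT.isContained_of_forall_le_degree fun b ↦ ?_
    have hb := hdeg b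
    rw [degree_compl]
    omega

theorem card_le_of_isContained_compl_completeEquipartiteGraph [Fintype α] {r t : ℕ}
    (hT : T.Preconnected) (h : T ⊑ (completeEquipartiteGraph r t)ᶜ) : Fintype.card α ≤ t := by
  obtain ⟨f⟩ := h
  have hpart : ∀ x y, (f x).1 = (f y).1 := fun x y ↦
    (hT x y).apply_eq_of_forall_adj fun x y hxy ↦ not_not.1 (f.toHom.map_adj hxy).2
  simpa using Fintype.card_le_of_injective (fun x ↦ (f x).2)
    fun x y hxy ↦ f.injective (Prod.ext (hpart x y) hxy)

end SimpleGraph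

/-- `R(T_n, C_3) = 2n - 1` for every tree `T_n` on `n` vertices: every graph on `2n - 1`
vertices contains a triangle or its complement contains `T_n`, and there is a graph on
`2n - 2` vertices for which neither holds. -/
theorem stmt_3 {α : Type*} [Fintype α] (n : ℕ) (T : SimpleGraph α)
    (hT : T.IsTree) (hn : Fintype.card α = n) :
    (∀ G : SimpleGraph (Fin (2 * n - 1)),
      ¬ G.CliqueFree 3 ∨ ∃ f : T →g Gᶜ, Function.Injective f) ∧
    (∃ G : SimpleGraph (Fin (2 * n - 2)),
      G.CliqueFree 3 ∧ ¬ ∃ f : T →g Gᶜ, Function.Injective f) := by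
  refine ⟨fun G ↦ or_iff_not_imp_left.2 fun hG ↦ ?_, ?_⟩
  · obtain ⟨f⟩ := (not_not.1 hG).isContained_compl_of_isTree hT (by simp [hn])
    exact ⟨f.toHom, f.injective⟩
  · let e : Fin 2 × Fin (n - 1) ≃ Fin (2 * n - 2) := finProdFinEquiv.trans (finCongr (by omega))
    let K := completeEquipartiteGraph 2 (n - 1)
    have hK : K.CliqueFree 3 := (cliqueFree_completeMultipartiteGraph _ (by simp)).comap
      ⟨completeEquipartiteGraph.completeMultipartiteGraph.toCopy⟩
    refine ⟨K.map e, hK.comap ⟨(Iso.map e K).symm.toCopy⟩, fun ⟨f, hf⟩ ↦ ?_⟩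
    have hTK : T ⊑ Kᶜ := ⟨(Embedding.complEquiv (Iso.map e K).symm.toEmbedding).toCopy.comp ⟨f, hf⟩⟩
    have hle := card_le_of_isContained_compl_completeEquipartiteGraph hT.connected.preconnected hTK
    have hpos := Fintype.card_pos_iff.2 hT.connected.nonempty
    omega
end

section
/- Let m ≥ 5 be odd, G a C_m-free graph, and S_1, S_2 disjoint subsets of V(G) with ℓ = (m-1)/2. Suppose that for all x, y ∈ S_1 we have |N_{S_2}(x) ∩ N_{S_2}(y)| > ℓ, that for all x, y ∈ S_2 we have |N_{S_1}(x) ∩ N_{S_1}(y)| > ℓ, and that |S_1| ≥ ℓ + 1. Then the induced subgraph G[S_1] has no edges. -/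
/-!
Suppose `xy` is an edge with `x, y ∈ S₁`. List `ℓ + 1` distinct vertices
`y = v₀, v₁, …, v_ℓ = x` of `S₁`. Each consecutive pair `vᵢ, vᵢ₊₁` has more than `ℓ` common
neighbours in `S₂`, so pairwise distinct common neighbours `wᵢ` can be chosen greedily, and
`v₀ w₀ v₁ w₁ … w_{ℓ-1} v_ℓ` closed up by the edge `xy` is a cycle of length `2ℓ + 1 = m`.
-/

theorem Set.InjOn.update_Iic {ι α : Type*} [PartialOrder ι] [DecidableEq ι] {f : ι → α} {n : ι}
    {a : α} (hf : Set.InjOn f (Set.Iio n)) (ha : a ∉ f '' Set.Iio n) :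
    Set.InjOn (Function.update f n a) (Set.Iic n) := by
  have heq : Set.EqOn (Function.update f n a) f (Set.Iio n) :=
    fun i hi => Function.update_of_ne (ne_of_lt hi) a f
  rw [← Set.Iio_insert, Set.injOn_insert Set.self_notMem_Iio, heq.image_eq, Function.update_self]
  exact ⟨hf.congr heq.symm, ha⟩

theorem exists_injOn_forall_mem_of_lt_card {α : Type*} [Nonempty α] (t : ℕ → Finset α) :
    ∀ n, (∀ i < n, i < (t i).card) →
      ∃ f : ℕ → α, Set.InjOn f (Set.Iio n) ∧ ∀ i < n, f i ∈ t i
  | 0, _ => ⟨fun _ => Classical.arbitrary α, by simp, by simp⟩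
  | n + 1, ht => by
    classical
    obtain ⟨f, hf, hft⟩ := exists_injOn_forall_mem_of_lt_card t n fun i hi => ht i (by omega)
    obtain ⟨a, hat, haf⟩ : ∃ a ∈ t n, a ∉ (Finset.range n).image f :=
      Finset.exists_mem_notMem_of_card_lt_card <|
        Finset.card_image_le.trans_lt ((Finset.card_range n).trans_lt (ht n n.lt_add_one))
    refine ⟨Function.update f n a, ?_, fun i hi => ?_⟩
    · rw [Set.Iio_add_one_eq_Iic]
      exact hf.update_Iic (by simpa using haf)
    · rcases (Nat.lt_succ_iff_lt_or_eq.1 hi) with hi | rfl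
      · rw [Function.update_of_ne hi.ne]; exact hft i hi
      · rwa [Function.update_self]

theorem Finset.exists_injOn_Iic_of_lt_card {α : Type*} [DecidableEq α] {s : Finset α} {x y : α}
    (hx : x ∈ s) (hy : y ∈ s) (hxy : x ≠ y) {n : ℕ} (hn : 0 < n) (hns : n < s.card) :
    ∃ v : ℕ → α, v 0 = y ∧ v n = x ∧ Set.InjOn v (Set.Iic n) ∧ ∀ i ≤ n, v i ∈ s := by
  have : Nonempty α := ⟨x⟩
  -- `y` is forced at index `0` by a singleton; `x` is put at index `n` afterwards.
  obtain ⟨f, hf, hfs⟩ := exists_injOn_forall_mem_of_lt_card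
    (fun i => if i = 0 then {y} else s.erase x) n fun i hi => by
      split_ifs with h
      · simpa using h
      · rw [Finset.card_erase_of_mem hx]; omega
  have hf0 : f 0 = y := by simpa using hfs 0 hn
  have hfx : ∀ i < n, f i ≠ x ∧ f i ∈ s := fun i hi => by
    have := hfs i hi
    split_ifs at this with h
    · subst h; rw [Finset.mem_singleton] at this; exact ⟨this ▸ hxy.symm, this ▸ hy⟩
    · exact Finset.mem_erase.1 this
  refine ⟨Function.update f n x, ?_, Function.update_self .., hf.update_Iic ?_, fun i hi => ?_⟩
  · rw [Function.update_of_ne hn.ne, hf0]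
  · rintro ⟨i, hi, hix⟩; exact (hfx i hi).1 hix
  · rcases hi.lt_or_eq with hi | rfl
    · rw [Function.update_of_ne hi.ne]; exact (hfx i hi).2
    · rwa [Function.update_self]

namespace SimpleGraph

variable {V : Type*} {G : SimpleGraph V}

theorem exists_isCycle_of_injOn {n : ℕ} (hn : 2 ≤ n) (f : ℕ → V) (hf : Set.InjOn f (Set.Iic n))
    (hadj : ∀ i < n, G.Adj (f i) (f (i + 1))) (hclose : G.Adj (f n) (f 0)) :
    ∃ (u : V) (c : G.Walk u u), c.IsCycle ∧ c.length = n + 1 := by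
  set L := (List.range (n + 1)).map f
  have hne : L ≠ [] := by simp [L]
  have hchain : L.IsChain G.Adj := by
    rw [List.isChain_map, List.isChain_range_succ]; exact hadj
  have hclose' : G.Adj (L.getLast hne) (L.head hne) := by
    simpa [L, List.getLast_map, List.getLast_range] using hclose
  have hpath : (Walk.ofSupport L hne hchain).IsPath := by
    rw [Walk.isPath_def, Walk.support_ofSupport]
    refine List.Nodup.map_on (fun a ha b hb hab => hf ?_ ?_ hab) List.nodup_range
    all_goals simpa [Nat.lt_add_one_iff] using ‹_ ∈ List.range (n + 1)›
  refine ⟨_, .cons hclose' (.ofSupport L hne hchain), ?_, by simp [L]⟩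
  rw [Walk.isCycle_iff_isPath_tail_and_le_length, Walk.tail_cons]
  refine ⟨(Walk.isPath_copy ..).2 hpath, ?_⟩
  simp only [Walk.length_cons, Walk.length_ofSupport, List.length_map, List.length_range, L]
  omega

theorem exists_isCycle_of_alternating {n : ℕ} (hn : 0 < n) (v w : ℕ → V)
    (hv : Set.InjOn v (Set.Iic n)) (hw : Set.InjOn w (Set.Iio n))
    (hvw : ∀ i ≤ n, ∀ j < n, v i ≠ w j)
    (hadj : ∀ i < n, G.Adj (v i) (w i) ∧ G.Adj (w i) (v (i + 1)))
    (hclose : G.Adj (v n) (v 0)) :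
    ∃ (u : V) (c : G.Walk u u), c.IsCycle ∧ c.length = 2 * n + 1 := by
  set f : ℕ → V := fun k => if Even k then v (k / 2) else w (k / 2)
  have hf_even : ∀ j, f (2 * j) = v j := fun j => by simp [f]
  have hf_odd : ∀ j, f (2 * j + 1) = w j := fun j => by
    simp only [f, Nat.not_even_two_mul_add_one, if_false]
    congr 1
    omega
  refine exists_isCycle_of_injOn (by omega) f ?_ (fun i hi => ?_) ?_
  · intro a ha b hb hab
    simp only [Set.mem_Iic] at ha hb
    obtain ⟨j, rfl | rfl⟩ := Nat.even_or_odd' a <;> obtain ⟨k, rfl | rfl⟩ := Nat.even_or_odd' b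
    · rw [hf_even, hf_even] at hab; rw [hv (Set.mem_Iic.2 (by omega)) (Set.mem_Iic.2 (by omega)) hab]
    · rw [hf_even, hf_odd] at hab; exact absurd hab (hvw j (by omega) k (by omega))
    · rw [hf_odd, hf_even] at hab; exact absurd hab.symm (hvw k (by omega) j (by omega))
    · rw [hf_odd, hf_odd] at hab; rw [hw (Set.mem_Iio.2 (by omega)) (Set.mem_Iio.2 (by omega)) hab]
  · obtain ⟨j, rfl | rfl⟩ := Nat.even_or_odd' i
    · rw [hf_even, hf_odd]; exact (hadj j (by omega)).1
    · rw [hf_odd, show 2 * j + 1 + 1 = 2 * (j + 1) by ring, hf_even]; exact (hadj j (by omega)).2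
  · rw [hf_even, (hf_even 0 : f 0 = v 0)]
    exact hclose

end SimpleGraph

theorem stmt_10_general {V : Type*} (m ℓ : ℕ)
    (hm : 5 ≤ m) (hml : m = 2 * ℓ + 1)
    (G : SimpleGraph V) [DecidableRel G.Adj]
    (hG : ¬ ∃ (u : V) (p : G.Walk u u), p.IsCycle ∧ p.length = m)
    (S₁ S₂ : Finset V) (hdisj : Disjoint S₁ S₂)
    (h1 : ∀ x ∈ S₁, ∀ y ∈ S₁,
      ℓ < (S₂.filter (fun z => G.Adj x z ∧ G.Adj y z)).card)
    (hS₁ : ℓ + 1 ≤ S₁.card) :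
    ∀ x ∈ S₁, ∀ y ∈ S₁, ¬ G.Adj x y := by
  classical
  intro x hx y hy hxy
  have : Nonempty V := ⟨x⟩
  obtain ⟨v, hv0, hvℓ, hv, hvS⟩ :=
    Finset.exists_injOn_Iic_of_lt_card hx hy hxy.ne (by omega : 0 < ℓ) (by omega)
  obtain ⟨w, hw, hwS⟩ := exists_injOn_forall_mem_of_lt_card
    (fun i => S₂.filter fun z => G.Adj (v i) z ∧ G.Adj (v (i + 1)) z) ℓ
    fun i hi => hi.trans (h1 _ (hvS i hi.le) _ (hvS (i + 1) hi))
  simp only [Finset.mem_filter] at hwS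
  have hvw : ∀ i ≤ ℓ, ∀ j < ℓ, v i ≠ w j := fun i hi j hj hij =>
    Finset.disjoint_left.1 hdisj (hvS i hi) (hij ▸ (hwS j hj).1)
  obtain ⟨u, c, hc, hlen⟩ := G.exists_isCycle_of_alternating (by omega) v w hv hw hvw
    (fun i hi => ⟨(hwS i hi).2.1, (hwS i hi).2.2.symm⟩) (by rw [hvℓ, hv0]; exact hxy)
  exact hG ⟨u, c, hc, hlen.trans hml.symm⟩

/-- Let `m = 2ℓ + 1 ≥ 5` be odd and `G` a graph with no cycle of length `m`. If `S₁, S₂`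
are disjoint vertex sets such that any two vertices of `S₁` have more than `ℓ` common
neighbors in `S₂`, any two vertices of `S₂` have more than `ℓ` common neighbors in `S₁`,
and `|S₁| ≥ ℓ + 1`, then `G[S₁]` has no edges. -/
theorem stmt_10 {V : Type*} [Fintype V] [DecidableEq V] (m ℓ : ℕ)
    (hm : 5 ≤ m) (hml : m = 2 * ℓ + 1)
    (G : SimpleGraph V) [DecidableRel G.Adj]
    (hG : ¬ ∃ (u : V) (p : G.Walk u u), p.IsCycle ∧ p.length = m)
    (S₁ S₂ : Finset V) (hdisj : Disjoint S₁ S₂)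
    (h1 : ∀ x ∈ S₁, ∀ y ∈ S₁,
      ℓ < (S₂.filter (fun z => G.Adj x z ∧ G.Adj y z)).card)
    (h2 : ∀ x ∈ S₂, ∀ y ∈ S₂,
      ℓ < (S₁.filter (fun z => G.Adj x z ∧ G.Adj y z)).card)
    (hS₁ : ℓ + 1 ≤ S₁.card) :
    ∀ x ∈ S₁, ∀ y ∈ S₁, ¬ G.Adj x y :=
  stmt_10_general m ℓ hm hml G hG S₁ S₂ hdisj h1 hS₁
end

section
/- Let m ≥ 5 be odd with ℓ = (m-1)/2, and let G be a C_m-free graph with disjoint vertex sets S_1, S_2 such that for all x, y ∈ S_1, |N_{S_2}(x) ∩ N_{S_2}(y)| > ℓ, for all x, y ∈ S_2, |N_{S_1}(x) ∩ N_{S_1}(y)| > ℓ, every vertex of S_2 has at least 3 neighbors in S_1, and |S_1| ≥ ℓ. Then no vertex w outside S_1 ∪ S_2 is adjacent both to a vertex of S_1 and to a vertex of S_2. -/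
/-!
Suppose `w ∼ x ∈ S₁` and `w ∼ y ∈ S₂`. Since `y` has more than `ℓ ≥ 2` neighbours in `S₁`, it has
one, `c`, other than `x`. Any two vertices of `S₁` have more than `ℓ` common neighbours in `S₂`, so a
path from `c` to `x` alternating between `S₁` and `S₂`, with `ℓ` vertices in `S₁` and `ℓ - 1` in `S₂`
(none of them `y`), can be built greedily. Then `w, y, c, …, x, w` is a cycle of length `2ℓ + 1 = m`.
-/

open Finset

namespace SimpleGraph

variable {V : Type*} {G : SimpleGraph V}

theorem Walk.IsPath.cons_concat_isCycle {u v w : V} {p : G.Walk u v} (hp : p.IsPath)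
    (huv : u ≠ v) (hw : w ∉ p.support) (hwu : G.Adj w u) (hvw : G.Adj v w) :
    (Walk.cons hwu (p.concat hvw)).IsCycle := by
  have hpath : (p.concat hvw).IsPath := hp.concat hw hvw
  refine (Walk.cons_isCycle_iff _ hwu).mpr ⟨hpath, fun he => ?_⟩
  have hlen := hpath.length_eq_one_of_mem_edges (Sym2.eq_swap ▸ he)
  have : p.length ≠ 0 := fun h => huv (Walk.eq_of_length_eq_zero h)
  simp only [Walk.length_concat] at hlen
  omega

variable [DecidableEq V] [DecidableRel G.Adj]

theorem exists_alternating_isPath {T S : Finset V} (hTS : Disjoint T S) {n : ℕ}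
    (hcommon : ∀ a ∈ T, ∀ b ∈ T, n < #{z ∈ S | G.Adj a z ∧ G.Adj b z}) (k : ℕ)
    {a b : V} {A F : Finset V} (ha : a ∈ T) (hb : b ∈ T) (hab : a ≠ b) (hAT : A ⊆ T)
    (haA : a ∉ A) (hbA : b ∉ A) (hkA : k ≤ #A) (hF : #F + k ≤ n) :
    ∃ p : G.Walk a b, p.IsPath ∧ p.length = 2 * k + 2 ∧
      ∀ v ∈ p.support, v = a ∨ v = b ∨ v ∈ A ∨ (v ∈ S ∧ v ∉ F) := by
  have hT : ∀ v ∈ T, v ∉ S := fun _ hv => Finset.disjoint_left.mp hTS hv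
  induction k generalizing a A F with
  | zero =>
    obtain ⟨z, hz, hzF⟩ := exists_mem_notMem_of_card_lt_card (hF.trans_lt (hcommon a ha b hb))
    obtain ⟨hzS, haz, hbz⟩ := mem_filter.mp hz
    refine ⟨.cons haz (.cons hbz.symm .nil), ?_, rfl, ?_⟩
    · grind [Walk.cons_isPath_iff, Walk.support_cons, Walk.support_nil, Walk.IsPath.nil]
    · grind [Walk.support_cons, Walk.support_nil]
  | succ k ih =>
    obtain ⟨a', ha'A⟩ : A.Nonempty := card_pos.mp (by omega)
    have ha' : a' ∈ T := hAT ha'A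
    obtain ⟨z, hz, hzF⟩ :=
      exists_mem_notMem_of_card_lt_card ((by omega : #F ≤ n).trans_lt (hcommon a ha a' ha'))
    obtain ⟨hzS, haz, ha'z⟩ := mem_filter.mp hz
    obtain ⟨q, hq, hqlen, hqsupp⟩ := ih (A := A.erase a') (F := insert z F) ha' (by grind)
      ((erase_subset _ _).trans hAT) (notMem_erase _ _) (by grind)
      (by grind [card_erase_of_mem]) (by grind [card_insert_le])
    refine ⟨.cons haz (.cons ha'z.symm q), ?_, by simp only [Walk.length_cons, hqlen]; ring, ?_⟩
    · grind [Walk.cons_isPath_iff, Walk.support_cons]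
    · grind [Walk.support_cons]

end SimpleGraph

open SimpleGraph

theorem stmt_11_general {V : Type*} [DecidableEq V] (m ℓ : ℕ)
    (hm : 5 ≤ m) (hml : m = 2 * ℓ + 1)
    (G : SimpleGraph V) [DecidableRel G.Adj]
    (hG : ¬ ∃ (u : V) (p : G.Walk u u), p.IsCycle ∧ p.length = m)
    (S₁ S₂ : Finset V) (hdisj : Disjoint S₁ S₂)
    (h1 : ∀ x ∈ S₁, ∀ y ∈ S₁,
      ℓ < (S₂.filter (fun z => G.Adj x z ∧ G.Adj y z)).card)
    (h2 : ∀ x ∈ S₂, ∀ y ∈ S₂,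
      ℓ < (S₁.filter (fun z => G.Adj x z ∧ G.Adj y z)).card) :
    ∀ w : V, w ∉ S₁ ∪ S₂ →
      ¬ ((∃ x ∈ S₁, G.Adj w x) ∧ (∃ y ∈ S₂, G.Adj w y)) := by
  rintro w hw ⟨⟨x, hx, hwx⟩, ⟨y, hy, hwy⟩⟩
  have hyN : ℓ < #{z ∈ S₁ | G.Adj y z} := by simpa only [and_self] using h2 y hy y hy
  obtain ⟨c, hc, hcx⟩ :=
    exists_mem_notMem_of_card_lt_card (s := {x}) (t := {z ∈ S₁ | G.Adj y z}) (by simp; omega)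
  simp only [mem_filter, mem_singleton] at hc hcx
  set pool := (S₁.erase c).erase x
  have hpool : ℓ - 2 ≤ #pool := by
    grind [card_le_card (filter_subset _ S₁), pred_card_le_card_erase]
  obtain ⟨p, hp, hplen, hpsupp⟩ := exists_alternating_isPath (G := G) (F := {y}) hdisj h1
    (ℓ - 2) hc.1 hx hcx ((erase_subset _ _).trans (erase_subset _ _)) (by simp)
    (by simp) hpool (by simp; omega)
  have hyx : y ≠ x := fun h => disjoint_left.mp hdisj hx (h ▸ hy)
  have hq : (Walk.cons hc.2 p).IsPath := by
    grind [Walk.cons_isPath_iff, Finset.disjoint_left]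
  have hwq : w ∉ (Walk.cons hc.2 p).support := by
    grind [Walk.support_cons, Finset.disjoint_left]
  refine hG ⟨w, _, hq.cons_concat_isCycle hyx hwq hwy hwx.symm, ?_⟩
  simp only [Walk.length_cons, Walk.length_concat, hplen]
  omega

/-- Let `m = 2ℓ + 1 ≥ 5` be odd and `G` a graph with no cycle of length `m`. If `S₁, S₂`
are disjoint vertex sets such that any two vertices of `S₁` have more than `ℓ` common
neighbors in `S₂`, any two vertices of `S₂` have more than `ℓ` common neighbors in `S₁`,
every vertex of `S₂` has at least `3` neighbors in `S₁`, and `|S₁| ≥ ℓ`, then no vertex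
outside `S₁ ∪ S₂` is adjacent both to a vertex of `S₁` and to a vertex of `S₂`. -/
theorem stmt_11 {V : Type*} [Fintype V] [DecidableEq V] (m ℓ : ℕ)
    (hm : 5 ≤ m) (hml : m = 2 * ℓ + 1)
    (G : SimpleGraph V) [DecidableRel G.Adj]
    (hG : ¬ ∃ (u : V) (p : G.Walk u u), p.IsCycle ∧ p.length = m)
    (S₁ S₂ : Finset V) (hdisj : Disjoint S₁ S₂)
    (h1 : ∀ x ∈ S₁, ∀ y ∈ S₁,
      ℓ < (S₂.filter (fun z => G.Adj x z ∧ G.Adj y z)).card)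
    (h2 : ∀ x ∈ S₂, ∀ y ∈ S₂,
      ℓ < (S₁.filter (fun z => G.Adj x z ∧ G.Adj y z)).card)
    (h3 : ∀ y ∈ S₂, 3 ≤ (S₁.filter (fun z => G.Adj y z)).card)
    (hS₁ : ℓ ≤ S₁.card) :
    ∀ w : V, w ∉ S₁ ∪ S₂ →
      ¬ ((∃ x ∈ S₁, G.Adj w x) ∧ (∃ y ∈ S₂, G.Adj w y)) :=
  stmt_11_general m ℓ hm hml G hG S₁ S₂ hdisj h1 h2
end

section
/- Let F be a forest whose components are C_1, ..., C_d ordered by size, with |C_i| < N/2 for all i and |C_1| + ... + |C_d| = N - 1, where d ≥ 3 and N ≥ 4. Then the components can be partitioned into two groups whose total sizes each lie between (N-1)/3 and 2(N-1)/3. -/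
/-! Order the components arbitrarily and add them one at a time until the running total first
reaches a third of `N - 1`. If it has then not overshot two thirds, the components added so far
form one group; otherwise the last component added is by itself larger than a third, and being
smaller than half of `N` it is also at most two thirds. -/

open Finset

theorem Finset.exists_sum_crossing {ι : Type*} [DecidableEq ι] (c : ι → ℕ) (P : ℕ → Prop)
    (h0 : ¬ P 0) (s : Finset ι) (hs : P (∑ i ∈ s, c i)) :
    ∃ t ⊆ s, ∃ i ∈ s, i ∉ t ∧ ¬ P (∑ j ∈ t, c j) ∧ P (∑ j ∈ t, c j + c i) := by
  induction s using Finset.induction_on with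
  | empty => exact absurd hs (by simpa using h0)
  | insert a s ha ih =>
    by_cases hsP : P (∑ i ∈ s, c i)
    · obtain ⟨t, hts, i, his, hit, ht⟩ := ih hsP
      exact ⟨t, hts.trans (subset_insert a s), i, mem_insert_of_mem his, hit, ht⟩
    · rw [sum_insert ha, add_comm] at hs
      exact ⟨s, subset_insert a s, a, mem_insert_self a s, ha, hsP, hs⟩

theorem Finset.exists_subset_sum_mem_middle_third {ι : Type*} [DecidableEq ι] (c : ι → ℕ)
    (s : Finset ι) (hc : ∀ i ∈ s, 2 * c i ≤ ∑ j ∈ s, c j) :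
    ∃ t ⊆ s, ∑ j ∈ s, c j ≤ 3 * ∑ j ∈ t, c j ∧ 3 * ∑ j ∈ t, c j ≤ 2 * ∑ j ∈ s, c j := by
  set S := ∑ j ∈ s, c j
  rcases Nat.eq_zero_or_pos S with hS | hS
  · exact ⟨∅, empty_subset s, by simp [hS], by simp⟩
  obtain ⟨t, hts, i, his, hit, hbelow, habove⟩ :=
    exists_sum_crossing c (fun n ↦ S ≤ 3 * n) (by simpa using hS.ne') s (by omega)
  simp only [not_le] at hbelow habove
  by_cases hfit : 3 * (∑ j ∈ t, c j + c i) ≤ 2 * S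
  · refine ⟨insert i t, insert_subset his hts, ?_⟩
    rw [sum_insert hit, add_comm]
    exact ⟨habove, hfit⟩
  · have hi := hc i his
    exact ⟨{i}, singleton_subset_iff.mpr his, by rw [sum_singleton]; omega,
      by rw [sum_singleton]; omega⟩

theorem stmt_16_general (d N : ℕ) (c : Fin d → ℕ)
    (hsmall : ∀ i, 2 * c i < N)
    (hsum : ∑ i, c i = N - 1) :
    ∃ I : Finset (Fin d),
      N - 1 ≤ 3 * ∑ i ∈ I, c i ∧ 3 * ∑ i ∈ I, c i ≤ 2 * (N - 1) ∧
      N - 1 ≤ 3 * ∑ i ∈ Iᶜ, c i ∧ 3 * ∑ i ∈ Iᶜ, c i ≤ 2 * (N - 1) := by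
  obtain ⟨I, -, hlow, hhigh⟩ :=
    exists_subset_sum_mem_middle_third c univ fun i _ ↦ by have := hsmall i; omega
  have hsplit := sum_add_sum_compl I c
  rw [hsum] at hlow hhigh hsplit
  exact ⟨I, hlow, hhigh, by omega, by omega⟩

/-- Let `c 0 ≤ c 1 ≤ ... ≤ c (d-1)` be the sizes of the `d ≥ 3` components of a forest,
with `c i < N / 2` for all `i` and total `N - 1`, where `N ≥ 4`. Then the components can
be split into two groups whose total sizes both lie between `(N-1)/3` and `2(N-1)/3`. -/
theorem stmt_16 (d N : ℕ) (hd : 3 ≤ d) (hN : 4 ≤ N) (c : Fin d → ℕ)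
    (hmono : Monotone c) (hsmall : ∀ i, 2 * c i < N)
    (hsum : ∑ i, c i = N - 1) :
    ∃ I : Finset (Fin d),
      N - 1 ≤ 3 * ∑ i ∈ I, c i ∧ 3 * ∑ i ∈ I, c i ≤ 2 * (N - 1) ∧
      N - 1 ≤ 3 * ∑ i ∈ Iᶜ, c i ∧ 3 * ∑ i ∈ Iᶜ, c i ≤ 2 * (N - 1) :=
  stmt_16_general d N c hsmall hsum
end
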